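/- arXiv:2412.11607 — 3 statements merged into one kernel-verified Lean document; each statement's English description precedes it below -/
import Mathlib

section
/- Let $K:\mathbb{R}^N\times\mathbb{R}^N\to\mathbb{R}$ be measurable and antisymmetric, and $v:\mathbb{R}^N\to\mathbb{R}$ measurable, with $(x,y)\mapsto v(x)K(x,y)$ integrable on $\mathbb{R}^{2N}\setminus(C\Omega)^2$ where $C\Omega=\mathbb{R}^N\setminus\Omega$. Then $\tfrac12\int_{\mathbb{R}^{2N}\setminus(C\Omega)^2}K(x,y)(v(x)-v(y))\,dx\,dy = \int_\Omega v(x)\Big(\int_{\mathbb{R}^N}K(x,y)\,dy\Big)dx + \int_{C\Omega}v(x)\Big(\int_\Omega K(x,y)\,dy\Big)dx$ (nonlocal Green's formula). -/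
open MeasureTheory

/-- Nonlocal Green's formula: for an antisymmetric kernel `K` with
`(x,y) ↦ v(x) K(x,y)` integrable on `ℝ^{2N} \ (CΩ)²`,
`½ ∫∫ K(x,y)(v(x)-v(y)) = ∫_Ω v (∫_{ℝ^N} K dy) + ∫_{CΩ} v (∫_Ω K dy)`. -/
theorem stmt_7 {N : ℕ} (Ω : Set (EuclideanSpace ℝ (Fin N))) (hΩ : MeasurableSet Ω)
    (K : EuclideanSpace ℝ (Fin N) → EuclideanSpace ℝ (Fin N) → ℝ)
    (v : EuclideanSpace ℝ (Fin N) → ℝ) (hv : Measurable v)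
    (hKmeas : Measurable fun p : EuclideanSpace ℝ (Fin N) × EuclideanSpace ℝ (Fin N) => K p.1 p.2)
    (hKanti : ∀ x y, K x y = -K y x)
    (hint : IntegrableOn
      (fun p : EuclideanSpace ℝ (Fin N) × EuclideanSpace ℝ (Fin N) => v p.1 * K p.1 p.2)
      ((Ω ×ˢ Set.univ) ∪ (Ωᶜ ×ˢ Ω))) :
    (1 / 2 : ℝ) * ∫ p in ((Ω ×ˢ Set.univ) ∪ (Ωᶜ ×ˢ Ω)),
        K (Prod.fst p) (Prod.snd p) * (v (Prod.fst p) - v (Prod.snd p)) =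
      (∫ x in Ω, v x * ∫ y, K x y) + ∫ x in Ωᶜ, v x * ∫ y in Ω, K x y := by
  set D : Set (EuclideanSpace ℝ (Fin N) × EuclideanSpace ℝ (Fin N)) :=
    (Ω ×ˢ Set.univ) ∪ (Ωᶜ ×ˢ Ω) with hDdef
  have hswap : Prod.swap ⁻¹' D = D := by
    ext ⟨x, y⟩
    simp only [hDdef, Set.mem_preimage, Prod.swap_prod_mk, Set.mem_union, Set.mem_prod,
      Set.mem_univ, and_true, Set.mem_compl_iff]
    tauto
  have hmp : MeasurePreserving
      (Prod.swap : (EuclideanSpace ℝ (Fin N) × EuclideanSpace ℝ (Fin N)) →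
        (EuclideanSpace ℝ (Fin N) × EuclideanSpace ℝ (Fin N))) volume volume :=
    Measure.measurePreserving_swap
  have hemb : MeasurableEmbedding
      (Prod.swap : (EuclideanSpace ℝ (Fin N) × EuclideanSpace ℝ (Fin N)) →
        (EuclideanSpace ℝ (Fin N) × EuclideanSpace ℝ (Fin N))) :=
    MeasurableEquiv.prodComm.measurableEmbedding
  have hDmeas : MeasurableSet D :=
    (hΩ.prod MeasurableSet.univ).union (hΩ.compl.prod hΩ)
  -- the kernel-reversed integrand is integrable on D
  have hf : IntegrableOn
      (fun q : EuclideanSpace ℝ (Fin N) × EuclideanSpace ℝ (Fin N) => v q.1 * K q.2 q.1) D := by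
    have heq : (fun q : EuclideanSpace ℝ (Fin N) × EuclideanSpace ℝ (Fin N) =>
        v q.1 * K q.2 q.1) = fun q => -(v q.1 * K q.1 q.2) := by
      funext q; rw [hKanti q.2 q.1]; ring
    rw [heq]; exact hint.neg
  -- integrability of the swapped integrand
  have hint2 : IntegrableOn
      (fun p : EuclideanSpace ℝ (Fin N) × EuclideanSpace ℝ (Fin N) => v p.2 * K p.1 p.2) D := by
    have h := (hmp.integrableOn_comp_preimage hemb
      (f := fun q : EuclideanSpace ℝ (Fin N) × EuclideanSpace ℝ (Fin N) =>
        v q.1 * K q.2 q.1) (s := D)).2 hf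
    rw [hswap] at h
    exact h.congr_fun (fun p _ => rfl) hDmeas
  -- swap argument: ∫_D v p.2 * K p.1 p.2 = - ∫_D v p.1 * K p.1 p.2
  have hkey : (∫ p in D, v p.2 * K p.1 p.2) = -∫ p in D, v p.1 * K p.1 p.2 := by
    have h1 := hmp.setIntegral_preimage_emb hemb
      (fun q : EuclideanSpace ℝ (Fin N) × EuclideanSpace ℝ (Fin N) => v q.1 * K q.2 q.1) D
    rw [hswap] at h1
    simp only [Prod.fst_swap, Prod.snd_swap] at h1
    rw [h1, ← integral_neg]
    refine setIntegral_congr_fun hDmeas (fun p _ => ?_)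
    rw [hKanti p.2 p.1]; ring
  -- rewrite the main integrand as a difference
  have hsplit : (∫ p in D, K (Prod.fst p) (Prod.snd p) * (v (Prod.fst p) - v (Prod.snd p)))
      = (∫ p in D, v p.1 * K p.1 p.2) - ∫ p in D, v p.2 * K p.1 p.2 := by
    rw [← integral_sub hint hint2]
    refine setIntegral_congr_fun hDmeas (fun p _ => ?_)
    ring
  have hmain : (1 / 2 : ℝ) * (∫ p in D, K (Prod.fst p) (Prod.snd p)
      * (v (Prod.fst p) - v (Prod.snd p))) = ∫ p in D, v p.1 * K p.1 p.2 := by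
    rw [hsplit, hkey]; ring
  rw [hmain]
  -- split D into its two disjoint pieces
  have hdisj : Disjoint (Ω ×ˢ (Set.univ : Set (EuclideanSpace ℝ (Fin N)))) (Ωᶜ ×ˢ Ω) := by
    rw [Set.disjoint_left]
    rintro ⟨x, y⟩ ⟨hx, -⟩ ⟨hx', -⟩
    exact hx' hx
  have hm2 : MeasurableSet (Ωᶜ ×ˢ Ω) := hΩ.compl.prod hΩ
  have hi1 : IntegrableOn
      (fun p : EuclideanSpace ℝ (Fin N) × EuclideanSpace ℝ (Fin N) => v p.1 * K p.1 p.2)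
      (Ω ×ˢ Set.univ) := hint.mono_set Set.subset_union_left
  have hi2 : IntegrableOn
      (fun p : EuclideanSpace ℝ (Fin N) × EuclideanSpace ℝ (Fin N) => v p.1 * K p.1 p.2)
      (Ωᶜ ×ˢ Ω) := hint.mono_set Set.subset_union_right
  rw [hDdef, setIntegral_union hdisj hm2 hi1 hi2]
  congr 1
  · rw [Measure.volume_eq_prod, setIntegral_prod _ hi1]
    refine setIntegral_congr_fun hΩ (fun x _ => ?_)
    rw [Measure.restrict_univ]
    exact integral_const_mul (v x) fun y => K x y
  · rw [Measure.volume_eq_prod, setIntegral_prod _ hi2]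
    refine setIntegral_congr_fun hΩ.compl (fun x _ => ?_)
    exact integral_const_mul (v x) fun y => K x y
end

section
/- Let $X$ be a Banach space and $I:X\to\mathbb{R}$ a convex Gateaux-differentiable functional satisfying the uniform-convexity-type estimate $\tfrac12 I(u)+\tfrac12 I(v)-I(\tfrac{u+v}{2})\ge \delta(\|\tfrac{u-v}{2}\|)$ for all $u,v\in X$, where $\delta:[0,\infty)\to[0,\infty)$ is nondecreasing with $\delta(t)>0$ for $t>0$. Suppose $u_n\rightharpoonup u$ weakly, $I$ is sequentially weakly lower semicontinuous, $I(u_n)$ converges, and $\limsup_n \langle I'(u_n),u_n-u\rangle\le 0$. Then $u_n\to u$ strongly in $X$. -/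
/-!
Convexity and the Gateaux derivative give the tangent inequality
`I x + I' x (y - x) ≤ I y`. At `x = u n`, `y = w` it yields `I (u n) - I w ≤ I' (u n) (u n - w)`,
so `lim I (u n) ≤ I w`. Uniform convexity at `u n`, `w`, with the tangent inequality at `w`, gives
`δ ‖(u n - w) / 2‖ ≤ (I (u n) - I w) / 2 - I' w ((u n - w) / 2)`, whose right side tends to
`(lim I (u n) - I w) / 2 ≤ 0`; monotonicity and positivity of `δ` then force `‖u n - w‖ → 0`.
-/

open Filter Topology

theorem Real.liminf_eq_zero_of_tendsto_atTop {ι : Type*} {l : Filter ι} {f : ι → ℝ}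
    (hf : Tendsto f l atTop) : liminf f l = 0 :=
  Real.liminf_of_not_isCoboundedUnder fun ⟨b, hb⟩ =>
    (lt_add_one b).not_ge (hb (b + 1) (hf.eventually_ge_atTop (b + 1)))

theorem tendsto_zero_of_apply_le_of_tendsto {ι : Type*} {l : Filter ι} {δ : ℝ → ℝ}
    (hδmono : Monotone δ) (hδpos : ∀ t > 0, 0 < δ t) {r b : ι → ℝ} {β : ℝ}
    (hr : ∀ i, 0 ≤ r i) (hb : Tendsto b l (𝓝 β)) (hβ : β ≤ 0) (hrb : ∀ i, δ (r i) ≤ b i) :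
    Tendsto r l (𝓝 0) := by
  rw [Metric.tendsto_nhds]
  intro ε hε
  filter_upwards [hb.eventually (eventually_lt_nhds (hβ.trans_lt (hδpos ε hε)))] with i hi
  rw [Real.dist_0_eq_abs, abs_of_nonneg (hr i)]
  exact hδmono.reflect_lt ((hrb i).trans_lt hi)

theorem ConvexOn.add_le_of_hasDerivAt {X : Type*} [AddCommGroup X] [Module ℝ X] {I : X → ℝ}
    (hconv : ConvexOn ℝ Set.univ I) {x y : X} {d : ℝ}
    (hd : HasDerivAt (fun t : ℝ => I (x + t • (y - x))) d 0) : I x + d ≤ I y := by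
  have hline : (fun t : ℝ => I (x + t • (y - x))) = I ∘ AffineMap.lineMap x y := by
    ext t
    simp [AffineMap.lineMap_apply, add_comm]
  rw [hline] at hd
  have := (hconv.comp_affineMap (AffineMap.lineMap x y)).le_slope_of_hasDerivAt
    (Set.mem_univ 0) (Set.mem_univ 1) zero_lt_one hd
  simp only [slope_def_field, Function.comp_apply, AffineMap.lineMap_apply_zero,
    AffineMap.lineMap_apply_one, sub_zero, div_one] at this
  linarith

section

variable {X : Type*} [NormedAddCommGroup X] [NormedSpace ℝ X]

def WeakSeqTendsto (u : ℕ → X) (w : X) : Prop :=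
  ∀ φ : X →L[ℝ] ℝ, Tendsto (fun n => φ (u n)) atTop (𝓝 (φ w))

theorem WeakSeqTendsto.const_add_smul_sub {u : ℕ → X} {w : X} (h : WeakSeqTendsto u w)
    (z : X) (t : ℝ) : WeakSeqTendsto (fun n => z + t • (u n - w)) z := by
  intro φ
  simpa using (((h φ).sub_const (φ w)).const_mul t).const_add (φ z)

theorem WeakSeqTendsto.comp {u : ℕ → X} {w : X} (h : WeakSeqTendsto u w) {φ : ℕ → ℕ}
    (hφ : Tendsto φ atTop atTop) : WeakSeqTendsto (u ∘ φ) w :=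
  fun ψ => (h ψ).comp hφ

def UniformlyConvexWith (I : X → ℝ) (δ : ℝ → ℝ) : Prop :=
  ∀ u v : X, (1 / 2) * I u + (1 / 2) * I v - I ((1 / 2 : ℝ) • (u + v))
    ≥ δ ‖(1 / 2 : ℝ) • (u - v)‖

variable {I : X → ℝ} {I' : X → X →L[ℝ] ℝ} {δ : ℝ → ℝ}

theorem UniformlyConvexWith.not_bddAbove_range [Nontrivial X] (hunif : UniformlyConvexWith I δ)
    (hδpos : ∀ t > 0, 0 < δ t) (htan : ∀ x y, I x + I' x (y - x) ≤ I y) :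
    ¬BddAbove (Set.range I) := by
  rintro ⟨M, hM⟩
  have hle : ∀ y, I y ≤ M := fun y => hM ⟨y, rfl⟩
  -- A continuous linear functional bounded above vanishes, so `I` is constant.
  have hderiv : ∀ x, I' x = 0 := by
    intro x
    ext v
    by_contra hv
    have h := htan x (x + ((M - I x + 1) / I' x v) • v)
    rw [add_sub_cancel_left, map_smul, smul_eq_mul, div_mul_cancel₀ _ hv] at h
    linarith [hle (x + ((M - I x + 1) / I' x v) • v)]
  have hconst : ∀ x y, I x = I y := fun x y =>
    le_antisymm (by simpa [hderiv] using htan x y) (by simpa [hderiv] using htan y x)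
  obtain ⟨e, he⟩ := exists_ne (0 : X)
  have h := hunif e 0
  rw [hconst e ((1 / 2 : ℝ) • (e + 0)), hconst 0 ((1 / 2 : ℝ) • (e + 0))] at h
  have hpos := hδpos ‖(1 / 2 : ℝ) • (e - 0)‖ (by simpa using he)
  linarith

theorem ConvexOn.two_mul_sub_le {I : X → ℝ} (hconv : ConvexOn ℝ Set.univ I) (v z y : X) :
    2 * I v - I ((2 : ℝ) • z - y) ≤ I (y + (2 : ℝ) • (v - z)) := by
  have h := hconv.2 (Set.mem_univ (y + (2 : ℝ) • (v - z))) (Set.mem_univ ((2 : ℝ) • z - y))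
    (by norm_num : (0 : ℝ) ≤ 1 / 2) (by norm_num : (0 : ℝ) ≤ 1 / 2) (by norm_num)
  have hmid : (1 / 2 : ℝ) • (y + (2 : ℝ) • (v - z)) + (1 / 2 : ℝ) • ((2 : ℝ) • z - y) = v := by
    module
  rw [hmid, smul_eq_mul, smul_eq_mul] at h
  linarith

/-- Along a weakly convergent sequence `I` stays bounded above: otherwise, moving the weak limit
to a point where `I` is positive, `I` would tend to `+∞` along a subsequence, and the weak lower
semicontinuity hypothesis, read with Lean's convention `liminf = 0` for such sequences, would make
`I` nonpositive there. -/
theorem isBoundedUnder_le_of_weakSeqTendsto (hconv : ConvexOn ℝ Set.univ I)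
    (htan : ∀ x y, I x + I' x (y - x) ≤ I y) (hunif : UniformlyConvexWith I δ)
    (hδpos : ∀ t > 0, 0 < δ t)
    (hwlsc : ∀ (v : ℕ → X) (z : X), WeakSeqTendsto v z → I z ≤ liminf (fun n => I (v n)) atTop)
    {v : ℕ → X} {z : X} (hv : WeakSeqTendsto v z) :
    IsBoundedUnder (· ≤ ·) atTop (fun n => I (v n)) := by
  rcases subsingleton_or_nontrivial X with hX | hX
  · exact ⟨I z, eventually_map.2 (Eventually.of_forall fun n => by rw [Subsingleton.elim (v n) z])⟩
  have hlarge : ∀ M : ℝ, ∃ y, M < I y := by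
    simpa [bddAbove_def] using hunif.not_bddAbove_range hδpos htan
  obtain ⟨y, hy⟩ := hlarge 0
  by_contra hunbdd
  have hfreq : ∀ k : ℕ, ∃ᶠ n in atTop, (k : ℝ) < I (y + (2 : ℝ) • (v n - z)) := by
    intro k
    have hk : ∃ᶠ n in atTop, (k + I ((2 : ℝ) • z - y)) / 2 < I (v n) := by
      simpa [IsBoundedUnder, IsBounded, Filter.Frequently, not_le] using
        (not_exists.1 hunbdd) ((k + I ((2 : ℝ) • z - y)) / 2)
    refine hk.mono fun n hn => ?_
    linarith [hconv.two_mul_sub_le (v n) z y]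
  obtain ⟨φ, hφ, hφk⟩ := extraction_forall_of_frequently hfreq
  have htop : Tendsto (fun k => I (y + (2 : ℝ) • (v (φ k) - z))) atTop atTop :=
    tendsto_atTop_mono (fun k => (hφk k).le) tendsto_natCast_atTop_atTop
  have h := hwlsc _ y ((hv.const_add_smul_sub y 2).comp hφ.tendsto_atTop)
  rw [Function.comp_def, Real.liminf_eq_zero_of_tendsto_atTop htop] at h
  linarith

theorem le_apply_of_limsup_le_zero (hconv : ConvexOn ℝ Set.univ I)
    (htan : ∀ x y, I x + I' x (y - x) ≤ I y) (hunif : UniformlyConvexWith I δ)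
    (hδpos : ∀ t > 0, 0 < δ t)
    (hwlsc : ∀ (v : ℕ → X) (z : X), WeakSeqTendsto v z → I z ≤ liminf (fun n => I (v n)) atTop)
    {u : ℕ → X} {w : X} {c : ℝ} (hu : WeakSeqTendsto u w)
    (hc : Tendsto (fun n => I (u n)) atTop (𝓝 c))
    (hlimsup : limsup (fun n => I' (u n) (u n - w)) atTop ≤ 0) : c ≤ I w := by
  have hlower : ∀ n, I (u n) - I w ≤ I' (u n) (u n - w) := by
    intro n
    have h := htan (u n) w
    rw [← neg_sub, map_neg] at h
    linarith
  have hupper : ∀ n, I' (u n) (u n - w) ≤ I (w + (2 : ℝ) • (u n - w)) - I (u n) := by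
    intro n
    have h := htan (u n) (w + (2 : ℝ) • (u n - w))
    rw [show w + (2 : ℝ) • (u n - w) - u n = u n - w by module] at h
    linarith
  have hbdd : IsBoundedUnder (· ≤ ·) atTop (fun n => I' (u n) (u n - w)) := by
    obtain ⟨B, hB⟩ :=
      isBoundedUnder_le_of_weakSeqTendsto hconv htan hunif hδpos hwlsc (hu.const_add_smul_sub w 2)
    obtain ⟨A, hA⟩ := hc.isBoundedUnder_ge
    refine ⟨B - A, eventually_map.2 ?_⟩
    filter_upwards [eventually_map.1 hB, eventually_map.1 hA] with n hBn hAn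
    linarith [hupper n]
  have hlim : limsup (fun n => I (u n) - I w) atTop = c - I w := (hc.sub_const (I w)).limsup_eq
  have hmono : limsup (fun n => I (u n) - I w) atTop ≤ limsup (fun n => I' (u n) (u n - w)) atTop :=
    limsup_le_limsup (Eventually.of_forall hlower)
      (hc.sub_const (I w)).isBoundedUnder_ge.isCoboundedUnder_le hbdd
  linarith

theorem UniformlyConvexWith.tendsto_of_weakSeqTendsto (hunif : UniformlyConvexWith I δ)
    (hδmono : Monotone δ) (hδpos : ∀ t > 0, 0 < δ t) (htan : ∀ x y, I x + I' x (y - x) ≤ I y)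
    {u : ℕ → X} {w : X} {c : ℝ} (hu : WeakSeqTendsto u w)
    (hc : Tendsto (fun n => I (u n)) atTop (𝓝 c)) (hcw : c ≤ I w) :
    Tendsto u atTop (𝓝 w) := by
  have hbound : ∀ n, δ ‖(1 / 2 : ℝ) • (u n - w)‖
      ≤ (1 / 2) * I (u n) - (1 / 2) * I w - I' w ((1 / 2 : ℝ) • (u n - w)) := by
    intro n
    have h := htan w ((1 / 2 : ℝ) • (u n + w))
    rw [show (1 / 2 : ℝ) • (u n + w) - w = (1 / 2 : ℝ) • (u n - w) by module] at h
    linarith [hunif (u n) w]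
  have hderiv : Tendsto (fun n => I' w ((1 / 2 : ℝ) • (u n - w))) atTop (𝓝 0) := by
    simpa using hu.const_add_smul_sub 0 (1 / 2) (I' w)
  have hhalf := tendsto_zero_of_apply_le_of_tendsto hδmono hδpos (fun n => norm_nonneg _)
    (((hc.const_mul _).sub_const _).sub hderiv) (by linarith) hbound
  rw [← tendsto_sub_nhds_zero_iff, tendsto_zero_iff_norm_tendsto_zero]
  simpa [norm_smul] using hhalf.const_mul 2

end

theorem stmt_9_general {X : Type*} [NormedAddCommGroup X] [NormedSpace ℝ X]
    (I : X → ℝ) (I' : X → X →L[ℝ] ℝ)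
    (hconv : ConvexOn ℝ Set.univ I)
    (hgateaux : ∀ u v : X, HasDerivAt (fun t : ℝ => I (u + t • v)) (I' u v) 0)
    (δ : ℝ → ℝ) (hδmono : Monotone δ)
    (hδpos : ∀ t > 0, 0 < δ t)
    (hunif : ∀ u v : X, (1 / 2) * I u + (1 / 2) * I v - I ((1 / 2 : ℝ) • (u + v))
      ≥ δ ‖(1 / 2 : ℝ) • (u - v)‖)
    (hwlsc : ∀ (w : ℕ → X) (z : X),
      (∀ φ : X →L[ℝ] ℝ, Tendsto (fun n => φ (w n)) atTop (𝓝 (φ z))) →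
      I z ≤ liminf (fun n => I (w n)) atTop)
    (u : ℕ → X) (w : X)
    (hweak : ∀ φ : X →L[ℝ] ℝ, Tendsto (fun n => φ (u n)) atTop (𝓝 (φ w)))
    (hIconv : ∃ c : ℝ, Tendsto (fun n => I (u n)) atTop (𝓝 c))
    (hlimsup : limsup (fun n => I' (u n) (u n - w)) atTop ≤ 0) :
    Tendsto u atTop (𝓝 w) := by
  have htan : ∀ x y, I x + I' x (y - x) ≤ I y := fun x y =>
    hconv.add_le_of_hasDerivAt (hgateaux x (y - x))
  obtain ⟨c, hc⟩ := hIconv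
  have hcw : c ≤ I w := le_apply_of_limsup_le_zero hconv htan hunif hδpos hwlsc hweak hc hlimsup
  exact UniformlyConvexWith.tendsto_of_weakSeqTendsto hunif hδmono hδpos htan hweak hc hcw

/-- An (S₊)-type property: if `I` is convex, Gateaux differentiable, uniformly
convex with modulus `δ`, sequentially weakly lsc, `u_n ⇀ u`, `I(u_n)` converges
and `limsup ⟨I'(u_n), u_n - u⟩ ≤ 0`, then `u_n → u` strongly. -/
theorem stmt_9 {X : Type*} [NormedAddCommGroup X] [NormedSpace ℝ X] [CompleteSpace X]
    (I : X → ℝ) (I' : X → X →L[ℝ] ℝ)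
    (hconv : ConvexOn ℝ Set.univ I)
    (hgateaux : ∀ u v : X, HasDerivAt (fun t : ℝ => I (u + t • v)) (I' u v) 0)
    (δ : ℝ → ℝ) (hδmono : Monotone δ) (hδnonneg : ∀ t ≥ 0, 0 ≤ δ t)
    (hδpos : ∀ t > 0, 0 < δ t)
    (hunif : ∀ u v : X, (1 / 2) * I u + (1 / 2) * I v - I ((1 / 2 : ℝ) • (u + v))
      ≥ δ ‖(1 / 2 : ℝ) • (u - v)‖)
    (hwlsc : ∀ (w : ℕ → X) (z : X),
      (∀ φ : X →L[ℝ] ℝ, Tendsto (fun n => φ (w n)) atTop (𝓝 (φ z))) →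
      I z ≤ liminf (fun n => I (w n)) atTop)
    (u : ℕ → X) (w : X)
    (hweak : ∀ φ : X →L[ℝ] ℝ, Tendsto (fun n => φ (u n)) atTop (𝓝 (φ w)))
    (hIconv : ∃ c : ℝ, Tendsto (fun n => I (u n)) atTop (𝓝 c))
    (hlimsup : limsup (fun n => I' (u n) (u n - w)) atTop ≤ 0) :
    Tendsto u atTop (𝓝 w) :=
  stmt_9_general I I' hconv hgateaux δ hδmono hδpos hunif hwlsc u w hweak hIconv hlimsup
end

section
/- Ekeland's variational principle: Let $(V,d)$ be a complete metric space and $F:V\to\mathbb{R}\cup\{+\infty\}$ lower semicontinuous, bounded below, and not identically $+\infty$. Fix $\varepsilon>0$ and $u\in V$ with $F(u)\le\varepsilon+\inf_V F$. Then for every $\gamma>0$ there exists $v\in V$ with $F(v)\le F(u)$, $d(u,v)\le\gamma$, and $F(w)>F(v)-\tfrac{\varepsilon}{\gamma}d(v,w)$ for all $w\ne v$. -/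
/-!
Write `y ≼ x` when `F y + c d(x, y) ≤ F x` (Brøndsted's order), with `c = ε / γ`. The sets
`{y | y ≼ x}` are closed by lower semicontinuity and nested along `≼`. Choosing `x (n+1) ≼ x n`
with `F (x (n+1))` within `1 / (n+1)` of the infimum of `F` over `{y | y ≼ x n}` forces
`{y | y ≼ x (n+1)}` into a ball of radius `1 / ((n+1) c)`, so by Cantor's intersection theorem
these sets shrink to a single point `v`. Nothing except `v` lies below `v`, which is the strict
inequality; `v ≼ u` gives `F v ≤ F u`, and `c d(u, v) ≤ F u - F v ≤ ε` gives `d(u, v) ≤ γ`.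
-/

open Filter Topology Metric

lemma EReal.le_of_add_le_add_left {a b c : EReal} (ha : a ≠ ⊥) (ha' : a ≠ ⊤) (h : a + b ≤ a + c) :
    b ≤ c := by
  lift a to ℝ using ⟨ha', ha⟩
  exact EReal.addLECancellable_coe a h

lemma EReal.exists_le_sInf_add {α : Type*} {f : α → EReal} {s : Set α} (hs : s.Nonempty)
    (hbot : sInf (f '' s) ≠ ⊥) {δ : ℝ} (hδ : 0 < δ) : ∃ y ∈ s, f y ≤ sInf (f '' s) + δ := by
  by_cases htop : sInf (f '' s) = ⊤
  · obtain ⟨y, hy⟩ := hs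
    exact ⟨y, hy, by simp [htop]⟩
  obtain ⟨r, hr⟩ : ∃ r : ℝ, sInf (f '' s) = r := ⟨_, (EReal.coe_toReal htop hbot).symm⟩
  have hlt : sInf (f '' s) < ((r + δ : ℝ) : EReal) := by
    rw [hr]
    exact_mod_cast lt_add_of_pos_right r hδ
  obtain ⟨_, ⟨y, hy, rfl⟩, hy_lt⟩ := sInf_lt_iff.1 hlt
  exact ⟨y, hy, by rw [hr, ← EReal.coe_add]; exact hy_lt.le⟩

namespace Ekeland

variable {V : Type*} [MetricSpace V] {F : V → EReal} {c : ℝ}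

variable (F c) in
def below (x : V) : Set V := {y | F y + ((c * dist x y : ℝ) : EReal) ≤ F x}

lemma self_mem_below (x : V) : x ∈ below F c x := by
  simp [below]

lemma le_of_mem_below (hc : 0 ≤ c) {x y : V} (hy : y ∈ below F c x) : F y ≤ F x :=
  (le_add_of_nonneg_right (EReal.coe_nonneg.2 (mul_nonneg hc dist_nonneg))).trans hy

lemma below_subset_below (hc : 0 ≤ c) {x y : V} (hy : y ∈ below F c x) :
    below F c y ⊆ below F c x := by
  intro z hz
  calc F z + ((c * dist x z : ℝ) : EReal)
      ≤ F z + ((c * dist y z : ℝ) : EReal) + ((c * dist x y : ℝ) : EReal) := by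
        rw [add_assoc, ← EReal.coe_add]
        gcongr
        nlinarith [dist_triangle x y z]
    _ ≤ F y + ((c * dist x y : ℝ) : EReal) := by gcongr; exact hz
    _ ≤ F x := hy

lemma isClosed_below (hF : LowerSemicontinuous F) (x : V) : IsClosed (below F c x) := by
  have hcont : Continuous fun y => ((c * dist x y : ℝ) : EReal) :=
    continuous_coe_real_ereal.comp (by fun_prop)
  have hsum : LowerSemicontinuous fun y => F y + ((c * dist x y : ℝ) : EReal) :=
    hF.add' hcont.lowerSemicontinuous fun y =>
      EReal.continuousAt_add (Or.inr (EReal.coe_ne_bot _)) (Or.inr (EReal.coe_ne_top _))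
  exact hsum.isClosed_preimage (F x)

lemma below_subset_closedBall (hc : 0 < c) (hbot : ∀ z, F z ≠ ⊥) {x y : V} {δ : ℝ}
    (hy : y ∈ below F c x) (hy_top : F y ≠ ⊤) (hy_min : F y ≤ sInf (F '' below F c x) + δ) :
    below F c y ⊆ closedBall y (δ / c) := by
  intro z hz
  have hz_top : F z ≠ ⊤ := ne_top_of_le_ne_top hy_top (le_of_mem_below hc.le hz)
  have hz_min : F z + ((c * dist y z : ℝ) : EReal) ≤ F z + δ :=
    hz.trans (hy_min.trans (by gcongr; exact sInf_le ⟨z, below_subset_below hc.le hy hz, rfl⟩))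
  rw [mem_closedBall, dist_comm, le_div_iff₀' hc]
  exact_mod_cast EReal.le_of_add_le_add_left (hbot z) hz_top hz_min

lemma exists_minimizing_seq {m : ℝ} (hm : ∀ x, (m : EReal) ≤ F x) (x₀ : V) :
    ∃ x : ℕ → V, x 0 = x₀ ∧ ∀ n : ℕ, x (n + 1) ∈ below F c (x n) ∧
      F (x (n + 1)) ≤ sInf (F '' below F c (x n)) + ((1 / (n + 1) : ℝ) : EReal) := by
  have hbot : ∀ x, sInf (F '' below F c x) ≠ ⊥ := fun x =>
    ne_bot_of_le_ne_bot (EReal.coe_ne_bot m) (le_sInf (by rintro _ ⟨z, -, rfl⟩; exact hm z))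
  choose next hnext using fun (n : ℕ) x =>
    EReal.exists_le_sInf_add ⟨x, self_mem_below x⟩ (hbot x) (Nat.one_div_pos_of_nat (n := n))
  exact ⟨fun n => Nat.rec (motive := fun _ => V) x₀ next n, rfl, fun n => hnext n _⟩

theorem exists_mem_below_forall_lt [CompleteSpace V] (hF : LowerSemicontinuous F) {m : ℝ}
    (hm : ∀ x, (m : EReal) ≤ F x) (hc : 0 < c) {x₀ : V} (hx₀ : F x₀ ≠ ⊤) :
    ∃ v ∈ below F c x₀, ∀ w ≠ v, F v < F w + ((c * dist v w : ℝ) : EReal) := by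
  obtain ⟨x, rfl, hx⟩ := exists_minimizing_seq (c := c) hm x₀
  choose hx_mem hx_min using hx
  have hbot : ∀ z, F z ≠ ⊥ := fun z => ne_bot_of_le_ne_bot (EReal.coe_ne_bot m) (hm z)
  have hx_top : ∀ n, F (x n) ≠ ⊤ := fun n => by
    induction n with
    | zero => exact hx₀
    | succ n ih => exact ne_top_of_le_ne_top ih (le_of_mem_below hc.le (hx_mem n))
  set K : ℕ → Set V := fun n => below F c (x (n + 1))
  have hK_ball (n : ℕ) : K n ⊆ closedBall (x (n + 1)) (1 / (n + 1) / c) :=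
    below_subset_closedBall hc hbot (hx_mem n) (hx_top _) (hx_min n)
  have hK_bdd (n : ℕ) : Bornology.IsBounded (K n) := isBounded_closedBall.subset (hK_ball n)
  have hK_diam : Tendsto (fun n => diam (K n)) atTop (𝓝 0) := by
    have h : Tendsto (fun n : ℕ => 2 * (1 / ((n : ℝ) + 1) / c)) atTop (𝓝 (2 * (0 / c))) :=
      (tendsto_one_div_add_atTop_nhds_zero_nat.div_const c).const_mul 2
    rw [zero_div, mul_zero] at h
    exact squeeze_zero (fun n => diam_nonneg)
      (fun n => diam_le_of_subset_closedBall (by positivity) (hK_ball n)) h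
  have hK_anti : Antitone K :=
    antitone_nat_of_succ_le fun n => below_subset_below hc.le (hx_mem (n + 1))
  obtain ⟨v, hv⟩ := nonempty_iInter_of_nonempty_biInter (fun n => isClosed_below hF _) hK_bdd
    (fun N => ⟨x (N + 1), Set.mem_iInter₂.2 fun n hn => hK_anti hn (self_mem_below _)⟩) hK_diam
  rw [Set.mem_iInter] at hv
  refine ⟨v, below_subset_below hc.le (hx_mem 0) (hv 0), fun w hw => lt_of_not_ge fun hwv => hw ?_⟩
  have hw_mem (n : ℕ) : w ∈ K n := below_subset_below hc.le (hv n) hwv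
  exact dist_le_zero.1 <| ge_of_tendsto' hK_diam fun n =>
    dist_le_diam_of_mem (hK_bdd n) (hw_mem n) (hv n)

end Ekeland

open Ekeland in
theorem stmt_11_general {V : Type*} [MetricSpace V] [CompleteSpace V]
    (F : V → EReal) (hlsc : LowerSemicontinuous F)
    (hbdd : ∃ m : ℝ, ∀ x, (m : EReal) ≤ F x)
    (hproper : ∃ x, F x ≠ ⊤)
    (ε : ℝ) (hε : 0 < ε) (u : V)
    (hu : F u ≤ (ε : EReal) + sInf (Set.range F)) :
    ∀ γ : ℝ, 0 < γ → ∃ v : V, F v ≤ F u ∧ dist u v ≤ γ ∧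
      ∀ w : V, w ≠ v → F v - ((ε / γ * dist v w : ℝ) : EReal) < F w := by
  intro γ hγ
  obtain ⟨m, hm⟩ := hbdd
  obtain ⟨x₀, hx₀⟩ := hproper
  have hu_le (x : V) : F u ≤ ε + F x := hu.trans (by gcongr; exact sInf_le ⟨x, rfl⟩)
  have hu_top : F u ≠ ⊤ :=
    ne_top_of_le_ne_top (EReal.add_ne_top (EReal.coe_ne_top ε) hx₀) (hu_le x₀)
  have hc : 0 < ε / γ := div_pos hε hγ
  obtain ⟨v, hv, hv_min⟩ := exists_mem_below_forall_lt hlsc hm hc hu_top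
  have hv_le : F v ≤ F u := le_of_mem_below hc.le hv
  refine ⟨v, hv_le, ?_, fun w hw => EReal.sub_lt_of_lt_add (hv_min w hw)⟩
  have hdist : ε / γ * dist u v ≤ ε / γ * γ := by
    rw [div_mul_cancel₀ ε hγ.ne']
    refine EReal.coe_le_coe_iff.1 (EReal.le_of_add_le_add_left
      (ne_bot_of_le_ne_bot (EReal.coe_ne_bot m) (hm v)) (ne_top_of_le_ne_top hu_top hv_le) ?_)
    rw [add_comm (F v) (ε : EReal)]
    exact hv.trans (hu_le v)
  exact le_of_mul_le_mul_left hdist hc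

/-- Ekeland's variational principle (quantitative form). -/
theorem stmt_11 {V : Type*} [MetricSpace V] [CompleteSpace V]
    (F : V → EReal) (hlsc : LowerSemicontinuous F)
    (hbdd : ∃ m : ℝ, ∀ x, (m : EReal) ≤ F x)
    (hproper : ∃ x, F x ≠ ⊤) (hbot : ∀ x, F x ≠ ⊥)
    (ε : ℝ) (hε : 0 < ε) (u : V)
    (hu : F u ≤ (ε : EReal) + sInf (Set.range F)) :
    ∀ γ : ℝ, 0 < γ → ∃ v : V, F v ≤ F u ∧ dist u v ≤ γ ∧
      ∀ w : V, w ≠ v → F v - ((ε / γ * dist v w : ℝ) : EReal) < F w :=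
  stmt_11_general F hlsc hbdd hproper ε hε u hu
end
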